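/- Let d ≥ 1 and let p : ℝ^d → [0,∞) be a probability density satisfying an exponential tail bound: there exist C₁, C₂ > 0 with p(x₁) ≤ C₂ exp(−C₁|x₁|) for all x₁ ∈ ℝ^d. Let α, β, σ : [0,1] → ℝ be C¹ with α(0) = 1, β(0) = 0, β'(0) = 0, β_s > 0 for s ∈ (0,1], and σ(0) > 0. Then for every fixed x, x₀ ∈ ℝ^d: (i) lim_{s→0⁺} (x − α_s x₀ − β_s η₁(s,x,x₀))/σ_s = (x − x₀)/σ(0); and (ii) lim_{s→0⁺} b_s(x,x₀) = α'(0) x₀ + (σ'(0)/σ(0)) (x − x₀), where b_s(x,x₀) = α'_s x₀ + β'_s η₁(s,x,x₀) + σ'_s (x − α_s x₀ − β_s η₁(s,x,x₀))/σ_s. -/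

import Mathlib

/-! Completing the square, the Gaussian weight defining `η₁(s, x, x₀)` equals, up to a factor
independent of `x₁`, `exp (⟪a_s, x₁⟫ - q_s ‖x₁‖²)` with `a_s = β_s / (s σ_s²) • (x - α_s x₀)` and
`q_s = β_s² / (2 s σ_s²) ≥ 0`. Since `β_s / s → β'(0) = 0`, both `a_s` and `q_s` tend to `0`, so the
weight tends to `1` pointwise, and once `‖a_s‖ ≤ C₁ / 2` it is at most `exp (C₁ ‖x₁‖ / 2)`, which
the tail bound `p(x₁) ≤ C₂ exp (-C₁ ‖x₁‖)` absorbs together with the factor `x₁` of the numerator.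
Dominated convergence gives `η₁ → ∫ x₁ p(x₁) dx₁`, so `β_s η₁ → 0`, and both limits follow from the
continuity of the coefficients at `0`. -/

open MeasureTheory Filter Topology

/-- The conditional-mean function `η₁(s,x,x₀)` of the stochastic interpolant, written as a ratio of
Gaussian-smoothed integrals against the density `p`. -/
noncomputable def eta1 {d : ℕ} (p : EuclideanSpace ℝ (Fin d) → ℝ) (αs βs σs s : ℝ)
    (x x₀ : EuclideanSpace ℝ (Fin d)) : EuclideanSpace ℝ (Fin d) :=
  (∫ x₁, p x₁ * Real.exp (-‖x - αs • x₀ - βs • x₁‖ ^ 2 / (2 * s * σs ^ 2)))⁻¹ •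
    ∫ x₁, (p x₁ * Real.exp (-‖x - αs • x₀ - βs • x₁‖ ^ 2 / (2 * s * σs ^ 2))) • x₁

/-- The drift `b_s(x,x₀) = α'_s x₀ + β'_s η₁ + σ'_s (x − α_s x₀ − β_s η₁)/σ_s` of the
forecasting SDE. -/
noncomputable def drift {d : ℕ} (p : EuclideanSpace ℝ (Fin d) → ℝ)
    (αs βs σs αs' βs' σs' s : ℝ) (x x₀ : EuclideanSpace ℝ (Fin d)) :
    EuclideanSpace ℝ (Fin d) :=
  αs' • x₀ + βs' • eta1 p αs βs σs s x x₀ +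
    (σs' / σs) • (x - αs • x₀ - βs • eta1 p αs βs σs s x x₀)

open Module TopologicalSpace

theorem one_add_pow_le_mul_exp {a t : ℝ} (ha : 0 < a) (ht : 0 ≤ t) (n : ℕ) :
    (1 + t) ^ n ≤ n.factorial * Real.exp a / a ^ n * Real.exp (a * t) := by
  have h := Real.pow_div_factorial_le_exp (x := a * (1 + t)) (by positivity) n
  rw [mul_pow, div_le_iff₀ (by positivity), mul_add, mul_one, Real.exp_add] at h
  rw [div_mul_eq_mul_div, le_div_iff₀ (by positivity)]
  linarith

theorem HasDerivWithinAt.tendsto_div_of_eq_zero {f : ℝ → ℝ} {f' : ℝ} {s : Set ℝ}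
    (hf : HasDerivWithinAt f f' s 0) (h0 : f 0 = 0) :
    Tendsto (fun t => f t / t) (𝓝[s \ {0}] 0) (𝓝 f') :=
  (hasDerivWithinAt_iff_tendsto_slope.1 hf).congr fun t => by simp [slope_def_field, h0]

theorem inner_sub_mul_norm_sq_le {E : Type*} [NormedAddCommGroup E] [InnerProductSpace ℝ E]
    {a y : E} {b q : ℝ} (ha : ‖a‖ ≤ b) (hq : 0 ≤ q) : inner ℝ a y - q * ‖y‖ ^ 2 ≤ b * ‖y‖ := by
  nlinarith [real_inner_le_norm a y, mul_le_mul_of_nonneg_right ha (norm_nonneg y),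
    mul_nonneg hq (sq_nonneg ‖y‖)]

theorem neg_norm_sub_smul_sq_div {E : Type*} [NormedAddCommGroup E] [InnerProductSpace ℝ E]
    (m y : E) (b t : ℝ) :
    -‖m - b • y‖ ^ 2 / (2 * t) =
      -‖m‖ ^ 2 / (2 * t) + (inner ℝ ((b / t) • m) y - b ^ 2 / (2 * t) * ‖y‖ ^ 2) := by
  rw [norm_sub_sq_real, norm_smul, real_inner_smul_right, real_inner_smul_left, mul_pow,
    Real.norm_eq_abs, sq_abs]
  rcases eq_or_ne t 0 with rfl | ht
  · simp
  · field_simp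
    ring

section Integrability

variable {E : Type*} [NormedAddCommGroup E] [NormedSpace ℝ E] [FiniteDimensional ℝ E]
  [MeasurableSpace E] [BorelSpace E] {μ : Measure E} [μ.IsAddHaarMeasure]

theorem integrable_exp_neg_mul_norm_mul_one_add_norm {a : ℝ} (ha : 0 < a) :
    Integrable (fun x : E => Real.exp (-a * ‖x‖) * (1 + ‖x‖)) μ := by
  set n := finrank ℝ E + 2
  set K := n.factorial * Real.exp a / a ^ n
  have hr : (finrank ℝ E : ℝ) < n - 1 := by push_cast [n]; linarith
  refine ((integrable_one_add_norm hr).const_mul K).mono' (by fun_prop) (ae_of_all _ fun x => ?_)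
  have hx : 0 < 1 + ‖x‖ := by positivity
  have hpow : (1 + ‖x‖) ^ n * (1 + ‖x‖) ^ (-((n : ℝ) - 1)) = 1 + ‖x‖ := by
    rw [← Real.rpow_natCast, ← Real.rpow_add hx]; simp
  have hK : Real.exp (-a * ‖x‖) * (1 + ‖x‖) ^ n ≤ K := by
    rw [neg_mul, Real.exp_neg, inv_mul_le_iff₀ (Real.exp_pos _)]
    simpa [mul_comm] using one_add_pow_le_mul_exp ha (norm_nonneg x) n
  calc ‖Real.exp (-a * ‖x‖) * (1 + ‖x‖)‖
      = Real.exp (-a * ‖x‖) * (1 + ‖x‖) ^ n * (1 + ‖x‖) ^ (-((n : ℝ) - 1)) := by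
        rw [Real.norm_of_nonneg (by positivity), mul_assoc, hpow]
    _ ≤ K * (1 + ‖x‖) ^ (-((n : ℝ) - 1)) := by gcongr

end Integrability

section WeightedMean

variable {E : Type*} [NormedAddCommGroup E] [NormedSpace ℝ E] [MeasurableSpace E]
  {μ : Measure E}

noncomputable def weightedMean (f : E → ℝ) (μ : Measure E) : E :=
  (∫ x, f x ∂μ)⁻¹ • ∫ x, f x • x ∂μ

theorem weightedMean_const_mul {c : ℝ} (hc : c ≠ 0) (f : E → ℝ) :
    weightedMean (fun x => c * f x) μ = weightedMean f μ := by
  unfold weightedMean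
  simp_rw [mul_smul]
  rw [integral_const_mul, integral_smul, smul_smul, mul_inv, mul_right_comm, inv_mul_cancel₀ hc,
    one_mul]

variable [OpensMeasurableSpace E] [SecondCountableTopology E]

theorem tendsto_weightedMean_of_dominated {ι : Type*} {l : Filter ι} [l.IsCountablyGenerated]
    {f : ι → E → ℝ} {F : E → ℝ} (g : E → ℝ)
    (hf_meas : ∀ᶠ i in l, AEStronglyMeasurable (f i) μ)
    (hbound : ∀ᶠ i in l, ∀ᵐ x ∂μ, ‖f i x‖ * (1 + ‖x‖) ≤ g x) (hg : Integrable g μ)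
    (hlim : ∀ᵐ x ∂μ, Tendsto (fun i => f i x) l (𝓝 (F x))) (hF : ∫ x, F x ∂μ ≠ 0) :
    Tendsto (fun i => weightedMean (f i) μ) l (𝓝 (weightedMean F μ)) := by
  have hmass : Tendsto (fun i => ∫ x, f i x ∂μ) l (𝓝 (∫ x, F x ∂μ)) := by
    refine tendsto_integral_filter_of_dominated_convergence g hf_meas ?_ hg hlim
    filter_upwards [hbound] with i hi
    filter_upwards [hi] with x hx
    nlinarith [norm_nonneg (f i x), norm_nonneg x]
  have hmoment : Tendsto (fun i => ∫ x, f i x • x ∂μ) l (𝓝 (∫ x, F x • x ∂μ)) := by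
    refine tendsto_integral_filter_of_dominated_convergence g ?_ ?_ hg ?_
    · filter_upwards [hf_meas] with i hi using hi.smul measurable_id.aestronglyMeasurable
    · filter_upwards [hbound] with i hi
      filter_upwards [hi] with x hx
      rw [norm_smul]
      nlinarith [norm_nonneg (f i x), norm_nonneg x]
    · filter_upwards [hlim] with x hx using hx.smul_const x
  exact (hmass.inv₀ hF).smul hmoment

end WeightedMean

section Tilt

variable {E : Type*} [NormedAddCommGroup E] [InnerProductSpace ℝ E] [FiniteDimensional ℝ E]
  [MeasurableSpace E] [BorelSpace E] {μ : Measure E} [μ.IsAddHaarMeasure]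

theorem tendsto_weightedMean_mul_exp_inner_sub {ι : Type*} {l : Filter ι}
    [l.IsCountablyGenerated] {p : E → ℝ} {C c : ℝ} (hc : 0 < c)
    (hp : ∀ y, ‖p y‖ ≤ C * Real.exp (-c * ‖y‖)) (hp1 : ∫ y, p y ∂μ ≠ 0)
    {a : ι → E} {q : ι → ℝ} (ha : Tendsto a l (𝓝 0)) (hq : Tendsto q l (𝓝 0))
    (hq0 : ∀ᶠ i in l, 0 ≤ q i) :
    Tendsto (fun i => weightedMean (fun y => p y * Real.exp (inner ℝ (a i) y - q i * ‖y‖ ^ 2)) μ)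
      l (𝓝 (weightedMean p μ)) := by
  have hp_meas := (Integrable.of_integral_ne_zero hp1).aestronglyMeasurable
  refine tendsto_weightedMean_of_dominated (fun y => C * (Real.exp (-(c / 2) * ‖y‖) * (1 + ‖y‖)))
    (.of_forall fun i => hp_meas.mul (by fun_prop : Continuous _).aestronglyMeasurable) ?_
    ((integrable_exp_neg_mul_norm_mul_one_add_norm (half_pos hc)).const_mul C)
    (ae_of_all _ fun y => ?_) hp1
  · have ha' : ∀ᶠ i in l, ‖a i‖ ≤ c / 2 :=
      ha.norm.eventually (ge_mem_nhds (by simpa using half_pos hc))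
    filter_upwards [ha', hq0] with i hai hqi
    refine ae_of_all _ fun y => ?_
    calc ‖p y * Real.exp (inner ℝ (a i) y - q i * ‖y‖ ^ 2)‖ * (1 + ‖y‖)
        ≤ C * Real.exp (-c * ‖y‖) * Real.exp (c / 2 * ‖y‖) * (1 + ‖y‖) := by
          rw [norm_mul, Real.norm_of_nonneg (Real.exp_nonneg _)]
          have hC : 0 ≤ C * Real.exp (-c * ‖y‖) := (norm_nonneg _).trans (hp y)
          gcongr
          · exact hp y
          · exact inner_sub_mul_norm_sq_le hai hqi
      _ = C * (Real.exp (-(c / 2) * ‖y‖) * (1 + ‖y‖)) := by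
          rw [mul_assoc C, ← Real.exp_add]; ring_nf
  · have h : Tendsto (fun i => inner ℝ (a i) y - q i * ‖y‖ ^ 2) l (𝓝 0) := by
      simpa using (ha.inner tendsto_const_nhds).sub (hq.mul_const (‖y‖ ^ 2))
    simpa using tendsto_const_nhds.mul ((Real.continuous_exp.tendsto 0).comp h)

end Tilt

theorem eta1_eq_weightedMean {d : ℕ} (p : EuclideanSpace ℝ (Fin d) → ℝ) (αs βs σs s : ℝ)
    (x x₀ : EuclideanSpace ℝ (Fin d)) :
    eta1 p αs βs σs s x x₀ = weightedMean (fun y => p y * Real.exp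
      (inner ℝ ((βs / (s * σs ^ 2)) • (x - αs • x₀)) y - βs ^ 2 / (2 * s * σs ^ 2) * ‖y‖ ^ 2))
      volume := by
  rw [← weightedMean_const_mul (Real.exp_ne_zero (-‖x - αs • x₀‖ ^ 2 / (2 * s * σs ^ 2)))]
  refine congrArg (weightedMean · volume) (funext fun y => ?_)
  simp only [mul_assoc 2 s, neg_norm_sub_smul_sq_div, Real.exp_add]
  ring

theorem tendsto_eta1 {d : ℕ} {p : EuclideanSpace ℝ (Fin d) → ℝ} {C c : ℝ} (hc : 0 < c)
    (hp : ∀ y, ‖p y‖ ≤ C * Real.exp (-c * ‖y‖)) (hp1 : ∫ y, p y ≠ 0)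
    {l : Filter ℝ} [l.IsCountablyGenerated] {α β σ : ℝ → ℝ} {α₀ σ₀ : ℝ}
    (x x₀ : EuclideanSpace ℝ (Fin d)) (hs : ∀ᶠ s in l, 0 ≤ s) (hα : Tendsto α l (𝓝 α₀))
    (hβ : Tendsto β l (𝓝 0)) (hβs : Tendsto (fun s => β s / s) l (𝓝 0))
    (hσ : Tendsto σ l (𝓝 σ₀)) (hσ₀ : σ₀ ≠ 0) :
    Tendsto (fun s => eta1 p (α s) (β s) (σ s) s x x₀) l (𝓝 (weightedMean p volume)) := by
  have hr : Tendsto (fun s => β s / (s * σ s ^ 2)) l (𝓝 0) := by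
    simpa using (hβs.div (hσ.pow 2) (pow_ne_zero 2 hσ₀)).congr
      fun s => (div_mul_eq_div_div _ _ _).symm
  simp_rw [eta1_eq_weightedMean]
  refine tendsto_weightedMean_mul_exp_inner_sub hc hp hp1 ?_ ?_ ?_
  · simpa using hr.smul (tendsto_const_nhds.sub (hα.smul_const x₀))
  · simpa using ((hβ.mul hr).div_const 2).congr fun s => by ring
  · filter_upwards [hs] with s hs using by positivity

theorem drift_limit_at_zero_general
    (d : ℕ)
    (p : EuclideanSpace ℝ (Fin d) → ℝ) (hp0 : ∀ x₁, 0 ≤ p x₁)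
    (hpd : ∫ x₁, p x₁ = 1)
    (C₁ C₂ : ℝ) (hC₁ : 0 < C₁)
    (htail : ∀ x₁, p x₁ ≤ C₂ * Real.exp (-C₁ * ‖x₁‖))
    (α β σ α' β' σ' : ℝ → ℝ)
    (hα : ∀ u ∈ Set.Icc (0 : ℝ) 1, HasDerivWithinAt α (α' u) (Set.Icc 0 1) u)
    (hβ : ∀ u ∈ Set.Icc (0 : ℝ) 1, HasDerivWithinAt β (β' u) (Set.Icc 0 1) u)
    (hσ : ∀ u ∈ Set.Icc (0 : ℝ) 1, HasDerivWithinAt σ (σ' u) (Set.Icc 0 1) u)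
    (hα'c : ContinuousOn α' (Set.Icc 0 1)) (hβ'c : ContinuousOn β' (Set.Icc 0 1))
    (hσ'c : ContinuousOn σ' (Set.Icc 0 1))
    (hα0 : α 0 = 1) (hβ0 : β 0 = 0) (hβ'0 : β' 0 = 0)
    (hσ0 : 0 < σ 0) :
    ∀ x x₀ : EuclideanSpace ℝ (Fin d),
      Tendsto (fun s => (σ s)⁻¹ • (x - α s • x₀ - β s • eta1 p (α s) (β s) (σ s) s x x₀))
        (nhdsWithin 0 (Set.Ioc 0 1)) (nhds ((σ 0)⁻¹ • (x - x₀)))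
      ∧
      Tendsto (fun s => drift p (α s) (β s) (σ s) (α' s) (β' s) (σ' s) s x x₀)
        (nhdsWithin 0 (Set.Ioc 0 1)) (nhds (α' 0 • x₀ + (σ' 0 / σ 0) • (x - x₀))) := by
  intro x x₀
  have h01 : (0 : ℝ) ∈ Set.Icc (0 : ℝ) 1 := Set.left_mem_Icc.2 zero_le_one
  have hI : Set.Ioc (0 : ℝ) 1 ⊆ Set.Icc 0 1 := Set.Ioc_subset_Icc_self
  have hcont : ∀ {f : ℝ → ℝ}, ContinuousWithinAt f (Set.Icc 0 1) 0 →
      Tendsto f (𝓝[Set.Ioc 0 1] 0) (𝓝 (f 0)) :=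
    fun hf => (hf.mono hI).tendsto
  have hαt := hcont (hα 0 h01).continuousWithinAt
  have hβt := hcont (hβ 0 h01).continuousWithinAt
  have hσt := hcont (hσ 0 h01).continuousWithinAt
  rw [hβ0] at hβt
  have hβs : Tendsto (fun s => β s / s) (𝓝[Set.Ioc 0 1] 0) (𝓝 0) := by
    have hI' : Set.Ioc (0 : ℝ) 1 ⊆ Set.Icc 0 1 \ {0} := fun s hs => ⟨hI hs, hs.1.ne'⟩
    simpa [hβ'0] using ((hβ 0 h01).tendsto_div_of_eq_zero hβ0).mono_left (nhdsWithin_mono _ hI')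
  have hη := tendsto_eta1 hC₁ (fun y => (Real.norm_of_nonneg (hp0 y)).trans_le (htail y))
    (hpd ▸ one_ne_zero) x x₀ (eventually_nhdsWithin_of_forall fun s hs => hs.1.le) hαt hβt hβs
    hσt hσ0.ne'
  have hres : Tendsto (fun s => x - α s • x₀ - β s • eta1 p (α s) (β s) (σ s) s x x₀)
      (𝓝[Set.Ioc 0 1] 0) (𝓝 (x - x₀)) := by
    simpa [hα0] using (tendsto_const_nhds.sub (hαt.smul_const x₀)).sub (hβt.smul hη)
  refine ⟨(hσt.inv₀ hσ0.ne').smul hres, ?_⟩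
  simpa [drift, hβ'0] using
    (((hcont (hα'c 0 h01)).smul_const x₀).add ((hcont (hβ'c 0 h01)).smul hη)).add
      (((hcont (hσ'c 0 h01)).div hσt hσ0.ne').smul hres)

/-- Limits at `s → 0⁺` of the normalized residual and of the drift `b_s`,
for a probability density with exponential tails and C¹ interpolant coefficients with
`α(0) = 1`, `β(0) = 0`, `β'(0) = 0`, `σ(0) > 0`. -/
theorem drift_limit_at_zero
    (d : ℕ) (hd : 1 ≤ d)
    (p : EuclideanSpace ℝ (Fin d) → ℝ) (hp0 : ∀ x₁, 0 ≤ p x₁)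
    (hpd : ∫ x₁, p x₁ = 1)
    (C₁ C₂ : ℝ) (hC₁ : 0 < C₁) (hC₂ : 0 < C₂)
    (htail : ∀ x₁, p x₁ ≤ C₂ * Real.exp (-C₁ * ‖x₁‖))
    (α β σ α' β' σ' : ℝ → ℝ)
    (hα : ∀ u ∈ Set.Icc (0 : ℝ) 1, HasDerivWithinAt α (α' u) (Set.Icc 0 1) u)
    (hβ : ∀ u ∈ Set.Icc (0 : ℝ) 1, HasDerivWithinAt β (β' u) (Set.Icc 0 1) u)
    (hσ : ∀ u ∈ Set.Icc (0 : ℝ) 1, HasDerivWithinAt σ (σ' u) (Set.Icc 0 1) u)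
    (hα'c : ContinuousOn α' (Set.Icc 0 1)) (hβ'c : ContinuousOn β' (Set.Icc 0 1))
    (hσ'c : ContinuousOn σ' (Set.Icc 0 1))
    (hα0 : α 0 = 1) (hβ0 : β 0 = 0) (hβ'0 : β' 0 = 0)
    (hβpos : ∀ s ∈ Set.Ioc (0 : ℝ) 1, 0 < β s)
    (hσ0 : 0 < σ 0) :
    ∀ x x₀ : EuclideanSpace ℝ (Fin d),
      Tendsto (fun s => (σ s)⁻¹ • (x - α s • x₀ - β s • eta1 p (α s) (β s) (σ s) s x x₀))
        (nhdsWithin 0 (Set.Ioc 0 1)) (nhds ((σ 0)⁻¹ • (x - x₀)))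
      ∧
      Tendsto (fun s => drift p (α s) (β s) (σ s) (α' s) (β' s) (σ' s) s x x₀)
        (nhdsWithin 0 (Set.Ioc 0 1)) (nhds (α' 0 • x₀ + (σ' 0 / σ 0) • (x - x₀))) :=
  drift_limit_at_zero_general d p hp0 hpd C₁ C₂ hC₁ htail α β σ α' β' σ' hα hβ hσ hα'c hβ'c hσ'c hα0
    hβ0 hβ'0 hσ0
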